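/- arXiv:2004.14422 — 8 statements merged into one kernel-verified Lean document; each statement's English description precedes it below -/
import Mathlib

section
/- With interface closures uI = βu₁ + (1-β)u₂ and pI = μp₁ + (1-μ)p₂, where μ = (1-β)T₂/(βT₁ + (1-β)T₂), θᵢ = 1/Tᵢ, the algebraic identity Σᵢ₌₁² (pI - pᵢ)(uI - uᵢ)θᵢ ∂ₓαᵢ = 0 holds whenever ∂ₓα₁ + ∂ₓα₂ = 0. -/
/-! Both interface deviations are proportional to the jump of the phase values:
`pI - p₁ = (1 - μ)(p₂ - p₁)`, `pI - p₂ = -μ(p₂ - p₁)`, and likewise for `uI` with `β`.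
With `a₂ = -a₁` the sum therefore factors as `((1 - μ)(1 - β)θ₁ - μβθ₂)(p₂ - p₁)(u₂ - u₁)a₁`,
and `μ` is exactly the weight making the bracket vanish: both products equal
`β(1 - β)/(βT₁ + (1 - β)T₂)`. -/

lemma mul_add_one_sub_mul_pos {β T₁ T₂ : ℝ} (hT₁ : 0 < T₁) (hT₂ : 0 < T₂) (hβ₀ : 0 ≤ β)
    (hβ₁ : β ≤ 1) : 0 < β * T₁ + (1 - β) * T₂ := by
  simpa using convex_Ioi (0 : ℝ) hT₁ hT₂ hβ₀ (sub_nonneg.2 hβ₁) (by ring)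

lemma interface_sum_eq_of_add_eq_zero (u₁ u₂ p₁ p₂ θ₁ θ₂ β μ a₁ a₂ : ℝ) (ha : a₁ + a₂ = 0) :
    (μ * p₁ + (1 - μ) * p₂ - p₁) * (β * u₁ + (1 - β) * u₂ - u₁) * θ₁ * a₁
      + (μ * p₁ + (1 - μ) * p₂ - p₂) * (β * u₁ + (1 - β) * u₂ - u₂) * θ₂ * a₂
      = ((1 - μ) * (1 - β) * θ₁ - μ * β * θ₂) * (p₂ - p₁) * (u₂ - u₁) * a₁ := by
  obtain rfl : a₂ = -a₁ := eq_neg_of_add_eq_zero_right ha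
  ring

lemma one_sub_weight_mul_div_eq {β T₁ T₂ : ℝ} (hT₁ : T₁ ≠ 0) (hT₂ : T₂ ≠ 0)
    (hD : β * T₁ + (1 - β) * T₂ ≠ 0) :
    (1 - (1 - β) * T₂ / (β * T₁ + (1 - β) * T₂)) * (1 - β) * (1 / T₁)
      = (1 - β) * T₂ / (β * T₁ + (1 - β) * T₂) * β * (1 / T₂) := by
  field_simp
  ring

/-- Interface closure identity: with uI = βu₁+(1-β)u₂, pI = μp₁+(1-μ)p₂,
μ = (1-β)T₂/(βT₁+(1-β)T₂), one has Σᵢ (pI-pᵢ)(uI-uᵢ)θᵢ aᵢ = 0 whenever a₁+a₂ = 0. -/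
theorem interface_closure_identity (u1 u2 p1 p2 T1 T2 β a1 a2 : ℝ)
    (hT1 : 0 < T1) (hT2 : 0 < T2) (hβ0 : 0 ≤ β) (hβ1 : β ≤ 1) (ha : a1 + a2 = 0) :
    let θ1 := 1 / T1
    let θ2 := 1 / T2
    let μ := (1 - β) * T2 / (β * T1 + (1 - β) * T2)
    let uI := β * u1 + (1 - β) * u2
    let pI := μ * p1 + (1 - μ) * p2
    (pI - p1) * (uI - u1) * θ1 * a1 + (pI - p2) * (uI - u2) * θ2 * a2 = 0 := by
  intro θ1 θ2 μ uI pI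
  have hbalance : (1 - μ) * (1 - β) * θ1 = μ * β * θ2 :=
    one_sub_weight_mul_div_eq hT1.ne' hT2.ne' (mul_add_one_sub_mul_pos hT1 hT2 hβ0 hβ1).ne'
  calc _ = ((1 - μ) * (1 - β) * θ1 - μ * β * θ2) * (p2 - p1) * (u2 - u1) * a1 :=
        interface_sum_eq_of_add_eq_zero u1 u2 p1 p2 θ1 θ2 β μ a1 a2 ha
    _ = 0 := by rw [hbalance, sub_self, zero_mul, zero_mul, zero_mul]
end

section
/- The discrete analogue of the interface closure identity holds: with uI± and pI± defined from the closures at two states u⁻, u⁺ (with saturation α₁ + α₂ = 1 in each state), the sum over phases of the arithmetic means satisfies Σᵢ₌₁² overline{(pI - pᵢ)(uI - uᵢ)θᵢ}·⟦αᵢ⟧ = 0. -/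
/-!
In each state the interface closure makes the two phase products equal: with
`D = β T₀ + (1 - β) T₁` one has `pI - p₀ = β T₀ (p₁ - p₀) / D`, `uI - u₀ = (1 - β) (u₁ - u₀)`
and symmetrically for phase 1, so both products `(pI - pᵢ) (uI - uᵢ) θᵢ` equal
`β (1 - β) (p₁ - p₀) (u₁ - u₀) / D`.
Hence the mean is the same for both phases, and it multiplies `⟦α₁⟧ + ⟦α₂⟧ = 0`.
-/

theorem interface_products_eq {β μ uI pI T₀ T₁ u₀ u₁ p₀ p₁ : ℝ}
    (hT₀ : T₀ ≠ 0) (hT₁ : T₁ ≠ 0) (hD : β * T₀ + (1 - β) * T₁ ≠ 0)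
    (hμ : μ = (1 - β) * T₁ / (β * T₀ + (1 - β) * T₁))
    (huI : uI = β * u₀ + (1 - β) * u₁) (hpI : pI = μ * p₀ + (1 - μ) * p₁) :
    (pI - p₀) * (uI - u₀) / T₀ = (pI - p₁) * (uI - u₁) / T₁ := by
  subst hμ huI hpI
  field_simp
  ring

/-- Discrete interface closure identity: Σᵢ overline{(pI-pᵢ)(uI-uᵢ)θᵢ}·⟦αᵢ⟧ = 0
for two states (σ = false: minus, σ = true: plus) with saturation α₁+α₂ = 1. -/
theorem discrete_closure_identity
    (α u pr T θ : Bool → Fin 2 → ℝ) (β μ uI pI : Bool → ℝ)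
    (hT : ∀ σ i, 0 < T σ i)
    (hθ : ∀ σ i, θ σ i = 1 / T σ i)
    (hβ0 : ∀ σ, 0 ≤ β σ) (hβ1 : ∀ σ, β σ ≤ 1)
    (hμ : ∀ σ, μ σ = (1 - β σ) * T σ 1 / (β σ * T σ 0 + (1 - β σ) * T σ 1))
    (huI : ∀ σ, uI σ = β σ * u σ 0 + (1 - β σ) * u σ 1)
    (hpI : ∀ σ, pI σ = μ σ * pr σ 0 + (1 - μ σ) * pr σ 1)
    (hsat : ∀ σ, α σ 0 + α σ 1 = 1) :
    ∑ i : Fin 2,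
      (((pI true - pr true i) * (uI true - u true i) * θ true i +
          (pI false - pr false i) * (uI false - u false i) * θ false i) / 2) *
        (α true i - α false i) = 0 := by
  have balance : ∀ σ, (pI σ - pr σ 0) * (uI σ - u σ 0) * θ σ 0 =
      (pI σ - pr σ 1) * (uI σ - u σ 1) * θ σ 1 := by
    intro σ
    have hD : 0 < β σ * T σ 0 + (1 - β σ) * T σ 1 :=
      convex_Ioi (0 : ℝ) (hT σ 0) (hT σ 1) (hβ0 σ) (sub_nonneg.2 (hβ1 σ)) (add_sub_cancel _ _)
    simp only [hθ, mul_one_div]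
    exact interface_products_eq (hT σ 0).ne' (hT σ 1).ne' hD.ne' (hμ σ) (huI σ) (hpI σ)
  have opposite_jumps : α true 1 - α false 1 = -(α true 0 - α false 0) := by
    linarith [hsat true, hsat false]
  rw [Fin.sum_univ_two, opposite_jumps, balance true, balance false]
  ring
end

section
/- The fluctuation fluxes d±(u⁻,u⁺) := (⟦αᵢ⟧/2)·(uI±, 0, -pI±, -pI±uI±)ᵀ satisfy the entropy contribution identity v(u⁻)·d⁻(u⁻,u⁺) + v(u⁺)·d⁺(u⁻,u⁺) = -Σᵢ₌₁² overline{pᵢuᵢθᵢ}⟦αᵢ⟧, where v is the vector of entropy variables of the Baer-Nunziato model. -/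
/-!
In each state, saturation turns the volume-fraction row into `-pᵢθᵢ uI ⟦αᵢ⟧ / 2`, and the
identity `(pI - pᵢ)(uI - uᵢ)θᵢ = pI θᵢ (uI - uᵢ) - pᵢθᵢ uI + pᵢuᵢθᵢ` rewrites `v(u)·d(u)` as
`Σᵢ ((pI - pᵢ)(uI - uᵢ)θᵢ - pᵢuᵢθᵢ) ⟦αᵢ⟧ / 2`. Adding the two states, the closure identity
removes the interface terms and the averages `overline{pᵢuᵢθᵢ}` remain.
-/

/-- `β` plays the role of the jumps `⟦αᵢ⟧`, which sum to zero by saturation. -/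
theorem entropyVariables_dot_fluctuation_eq (p u θ β : Fin 2 → ℝ) (uI pI : ℝ)
    (hβ : β 0 + β 1 = 0) :
    (p 1 * θ 1 - p 0 * θ 0) * (β 0 / 2) * uI
        + ∑ i : Fin 2, (u i * θ i * (-pI) * (β i / 2) + (-θ i) * (-(pI * uI)) * (β i / 2))
      = ∑ i : Fin 2, ((pI - p i) * (uI - u i) * θ i - p i * u i * θ i) * (β i / 2) := by
  have hβ1 : β 1 = -β 0 := by linarith
  simp only [Fin.sum_univ_two, hβ1]
  ring

/-- The state `u⁻` is `false` and `u⁺` is `true`; the entropy variables are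
`v_α = p₂θ₂ - p₁θ₁`, `v_uᵢ = uᵢθᵢ`, `v_Eᵢ = -θᵢ` (the mass component of `d±` vanishes). -/
theorem entropy_contribution_of_d
    (α pr u θ : Bool → Fin 2 → ℝ) (uI pI : Bool → ℝ)
    (hsat : ∀ σ, α σ 0 + α σ 1 = 1)
    (hclos : ∑ i : Fin 2,
      (((pI true - pr true i) * (uI true - u true i) * θ true i +
          (pI false - pr false i) * (uI false - u false i) * θ false i) / 2) *
        (α true i - α false i) = 0) :
    ((pr false 1 * θ false 1 - pr false 0 * θ false 0) * ((α true 0 - α false 0) / 2) * uI false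
        + ∑ i : Fin 2,
            (u false i * θ false i * (-(pI false)) * ((α true i - α false i) / 2)
              + (-(θ false i)) * (-(pI false * uI false)) * ((α true i - α false i) / 2)))
      + ((pr true 1 * θ true 1 - pr true 0 * θ true 0) * ((α true 0 - α false 0) / 2) * uI true
        + ∑ i : Fin 2,
            (u true i * θ true i * (-(pI true)) * ((α true i - α false i) / 2)
              + (-(θ true i)) * (-(pI true * uI true)) * ((α true i - α false i) / 2)))
      = -(∑ i : Fin 2,
          ((pr true i * u true i * θ true i + pr false i * u false i * θ false i) / 2) *
            (α true i - α false i)) := by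
  have hjump : (α true 0 - α false 0) + (α true 1 - α false 1) = 0 := by
    linarith [hsat true, hsat false]
  rw [entropyVariables_dot_fluctuation_eq (pr false) (u false) (θ false) (fun i ↦ α true i - α false i)
      _ _ hjump,
    entropyVariables_dot_fluctuation_eq (pr true) (u true) (θ true) (fun i ↦ α true i - α false i)
      _ _ hjump]
  simp only [Fin.sum_univ_two] at hclos ⊢
  linear_combination hclos
end

section
/- For the Baer-Nunziato model with stiffened gas EOS, the jump of f(u)·v(u) - q(u) equals Σᵢ₌₁² ⟦αᵢpᵢuᵢθᵢ⟧, where f is the physical flux, v the entropy variables, and q = -Σᵢαᵢuᵢρᵢsᵢ the entropy flux. -/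
/-! The identity holds phase by phase and state by state, so the jump is just the difference
of two pointwise identities. With `h = e + p/ρ` and `E = e + u²/2`, the entropy part of `v`
cancels against `q`, and the enthalpy and kinetic parts cancel against the momentum and
energy fluxes, leaving `α p u θ`. -/

theorem flux_dot_entropyVariables_sub_entropyFlux {K : Type*} [Field K] [NeZero (2 : K)]
    {α ρ u θ e p s : K} (hρ : ρ ≠ 0) :
    (-s + (e + p / ρ - u ^ 2 / 2) * θ) * (α * ρ * u)
        + (u * θ) * (α * (ρ * u ^ 2 + p))
        + (-θ) * (α * u * (ρ * (e + u ^ 2 / 2) + p))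
        + α * ρ * s * u
      = α * p * u * θ := by
  field_simp
  ring

theorem jump_flux_potential_general
    (α ρ u θ e pr s E hh : Bool → Fin 2 → ℝ)
    (hρ : ∀ σ i, 0 < ρ σ i)
    (hhh : ∀ σ i, hh σ i = e σ i + pr σ i / ρ σ i)
    (hE : ∀ σ i, E σ i = e σ i + (u σ i) ^ 2 / 2) :
    (∑ i : Fin 2,
        ((-(s true i) + (hh true i - (u true i) ^ 2 / 2) * θ true i) *
            (α true i * ρ true i * u true i)
          + (u true i * θ true i) * (α true i * (ρ true i * (u true i) ^ 2 + pr true i))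
          + (-(θ true i)) * (α true i * u true i * (ρ true i * E true i + pr true i))
          + α true i * ρ true i * s true i * u true i))
      - (∑ i : Fin 2,
        ((-(s false i) + (hh false i - (u false i) ^ 2 / 2) * θ false i) *
            (α false i * ρ false i * u false i)
          + (u false i * θ false i) * (α false i * (ρ false i * (u false i) ^ 2 + pr false i))
          + (-(θ false i)) * (α false i * u false i * (ρ false i * E false i + pr false i))
          + α false i * ρ false i * s false i * u false i))
      = ∑ i : Fin 2,
          (α true i * pr true i * u true i * θ true i
            - α false i * pr false i * u false i * θ false i) := by
  rw [← Finset.sum_sub_distrib]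
  refine Finset.sum_congr rfl fun i _ => ?_
  simp only [hhh, hE, flux_dot_entropyVariables_sub_entropyFlux (hρ _ i).ne']

/-- For the Baer-Nunziato model with stiffened gas EOS, the jump of f(u)·v(u) - q(u)
equals Σᵢ ⟦αᵢpᵢuᵢθᵢ⟧ (σ = false: minus state, σ = true: plus state). -/
theorem jump_flux_potential
    (γ Cv pinf : Fin 2 → ℝ) (hγ : ∀ i, 1 < γ i) (hCv : ∀ i, 0 < Cv i)
    (hpinf : ∀ i, 0 ≤ pinf i)
    (α ρ u T θ e pr s E hh : Bool → Fin 2 → ℝ)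
    (hρ : ∀ σ i, 0 < ρ σ i) (hT : ∀ σ i, 0 < T σ i)
    (hθ : ∀ σ i, θ σ i = 1 / T σ i)
    (he : ∀ σ i, ρ σ i * e σ i = ρ σ i * Cv i * T σ i + pinf i)
    (hpr : ∀ σ i, pr σ i = (γ i - 1) * ρ σ i * e σ i - γ i * pinf i)
    (hs : ∀ σ i, s σ i = -(Cv i) * (Real.log (θ σ i) + (γ i - 1) * Real.log (ρ σ i)))
    (hhh : ∀ σ i, hh σ i = e σ i + pr σ i / ρ σ i)
    (hE : ∀ σ i, E σ i = e σ i + (u σ i) ^ 2 / 2) :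
    (∑ i : Fin 2,
        ((-(s true i) + (hh true i - (u true i) ^ 2 / 2) * θ true i) *
            (α true i * ρ true i * u true i)
          + (u true i * θ true i) * (α true i * (ρ true i * (u true i) ^ 2 + pr true i))
          + (-(θ true i)) * (α true i * u true i * (ρ true i * E true i + pr true i))
          + α true i * ρ true i * s true i * u true i))
      - (∑ i : Fin 2,
        ((-(s false i) + (hh false i - (u false i) ^ 2 / 2) * θ false i) *
            (α false i * ρ false i * u false i)
          + (u false i * θ false i) * (α false i * (ρ false i * (u false i) ^ 2 + pr false i))
          + (-(θ false i)) * (α false i * u false i * (ρ false i * E false i + pr false i))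
          + α false i * ρ false i * s false i * u false i))
      = ∑ i : Fin 2,
          (α true i * pr true i * u true i * θ true i
            - α false i * pr false i * u false i * θ false i) :=
  jump_flux_potential_general α ρ u θ e pr s E hh hρ hhh hE
end

section
/- The numerical fluxes h and d± of Proposition 4.2 (the entropy conservative fluxes for the Baer-Nunziato model) satisfy the entropy conservation condition: v(u⁻)·d⁻(u⁻,u⁺) + v(u⁺)·d⁺(u⁻,u⁺) + ⟦v·f - q⟧ = h(u⁻,u⁺)·⟦v⟧ for all admissible states u±. -/
/-
Both sides equal `∑ᵢ ᾱᵢ ⟦uᵢ pᵢ θᵢ⟧`. In phase `i` the flux is `ᾱᵢ F - βₛ (⟦αᵢ⟧/2) D`, where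
`D = ρ̂ (1, ū, Cv/θ̂ + u⁻u⁺/2) + (0, 0, p∞)` is a discrete state satisfying `D·⟦v⟧ = ⟦pθ⟧` (the
entropy potential), and `F = ū D + (mean (pθ) / θ̄) (0, 1, ū)`, so by the product rule for jumps
`F·⟦v⟧ = ⟦u pθ⟧`; both use `⟦log x⟧ = ⟦x⟧ / x̂` for the logarithmic mean `x̂`. On the other side
`αᵢ (v·f - q) = αᵢ uᵢ pᵢ θᵢ`, whose jump exceeds `ᾱᵢ ⟦uᵢ pᵢ θᵢ⟧` by `⟦αᵢ⟧ mean (uᵢ pᵢ θᵢ)`. The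
nonconservative products remove this excess because the interface closure makes
`θ₀ (p₀ - p_I)(u₀ - u_I) = θ₁ (p₁ - p_I)(u₁ - u_I)` in each state, and the `βₛ` terms cancel since
`⟦α₁⟧ = -⟦α₀⟧`.
-/

/-- Logarithmic mean, extended by its limit on the diagonal. -/
noncomputable def logMean (a b : ℝ) : ℝ :=
  if a = b then a else (b - a) / (Real.log b - Real.log a)

open Real Set

lemma logMean_pos {a b : ℝ} (ha : 0 < a) (hb : 0 < b) : 0 < logMean a b := by
  unfold logMean
  split_ifs with h
  · exact ha
  · rcases lt_or_gt_of_ne h with hlt | hgt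
    · exact div_pos (sub_pos.2 hlt) (sub_pos.2 (log_lt_log ha hlt))
    · exact div_pos_of_neg_of_neg (sub_neg.2 hgt) (sub_neg.2 (log_lt_log hb hgt))

lemma logMean_mul_log_sub_log {a b : ℝ} (ha : 0 < a) (hb : 0 < b) :
    logMean a b * (log b - log a) = b - a := by
  unfold logMean
  split_ifs with h
  · simp [h]
  · have hlog : log b - log a ≠ 0 :=
      sub_ne_zero.2 fun hl => h (log_injOn_pos (mem_Ioi.2 hb) (mem_Ioi.2 ha) hl).symm
    exact div_mul_cancel₀ _ hlog

lemma log_sub_log_eq_div_logMean {a b : ℝ} (ha : 0 < a) (hb : 0 < b) :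
    log b - log a = (b - a) / logMean a b :=
  eq_div_of_mul_eq (logMean_pos ha hb).ne' (by rw [mul_comm, logMean_mul_log_sub_log ha hb])

lemma convex_combination_pos {t a b : ℝ} (ht : t ∈ Icc 0 1) (ha : 0 < a) (hb : 0 < b) :
    0 < t * a + (1 - t) * b := by
  simpa only [smul_eq_mul, mem_Ioi] using
    convex_Ioi (0 : ℝ) ha hb ht.1 (sub_nonneg.2 ht.2) (add_sub_cancel t 1)

lemma convex_weight_mem_Icc {t a b : ℝ} (ht : t ∈ Icc 0 1) (ha : 0 < a) (hb : 0 < b) :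
    t * a / (t * a + (1 - t) * b) ∈ Icc 0 1 := by
  have hden := convex_combination_pos ht ha hb
  refine ⟨div_nonneg (mul_nonneg ht.1 ha.le) hden.le, (div_le_one hden).2 ?_⟩
  nlinarith [mul_nonneg (sub_nonneg.2 ht.2) hb.le]

namespace BaerNunziato

def jump (f : Bool → ℝ) : ℝ := f true - f false

noncomputable def mean (f : Bool → ℝ) : ℝ := (f true + f false) / 2

lemma jump_mul (f g : Bool → ℝ) :
    jump (fun σ => f σ * g σ) = mean f * jump g + mean g * jump f := by
  simp only [jump, mean]; ring

lemma mean_pos {f : Bool → ℝ} (hf : ∀ σ, 0 < f σ) : 0 < mean f := by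
  unfold mean; linarith [hf true, hf false]

section StiffenedGas

variable {γ Cv pinf : ℝ}

lemma stiffenedGas_pressure_mul_inv_temp {ρ T θ e p : ℝ} (hρ : ρ ≠ 0) (hT : T ≠ 0)
    (hθ : θ = 1 / T) (he : e = Cv * T + pinf / ρ) (hp : p = (γ - 1) * ρ * e - γ * pinf) :
    p * θ = (γ - 1) * Cv * ρ - pinf * θ := by
  subst hθ hp he; field_simp; ring

lemma stiffenedGas_entropyVar_eq {ρ u T θ e p s h : ℝ} (hρ : ρ ≠ 0) (hT : T ≠ 0)
    (hθ : θ = 1 / T) (he : e = Cv * T + pinf / ρ) (hp : p = (γ - 1) * ρ * e - γ * pinf)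
    (hs : s = -Cv * (log θ + (γ - 1) * log ρ)) (hh : h = e + p / ρ) :
    -s + (h - u ^ 2 / 2) * θ = Cv * (log θ + (γ - 1) * log ρ) + γ * Cv - u ^ 2 * θ / 2 := by
  subst hs hh hp he; subst hθ; field_simp; ring

variable {ρ u θ vρ P : Bool → ℝ}

lemma dissipation_dot_jump_entropyVar (hρ : ∀ σ, 0 < ρ σ) (hθ : ∀ σ, 0 < θ σ)
    (hvρ : ∀ σ, vρ σ = Cv * (log (θ σ) + (γ - 1) * log (ρ σ)) + γ * Cv - u σ ^ 2 * θ σ / 2)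
    (hP : ∀ σ, P σ = (γ - 1) * Cv * ρ σ - pinf * θ σ) :
    logMean (ρ false) (ρ true) * jump vρ
        + logMean (ρ false) (ρ true) * mean u * jump (fun σ => u σ * θ σ)
        + (logMean (ρ false) (ρ true) * (Cv / logMean (θ false) (θ true) + u false * u true / 2)
            + pinf) * jump (fun σ => -θ σ)
      = jump P := by
  have hlogρ := logMean_mul_log_sub_log (hρ false) (hρ true)
  have hlogθ := log_sub_log_eq_div_logMean (hθ false) (hθ true)
  simp only [jump, mean, hvρ, hP]
  linear_combination (γ - 1) * Cv * hlogρ + logMean (ρ false) (ρ true) * Cv * hlogθ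

lemma entropyConservativeFlux_dot_jump_entropyVar (hρ : ∀ σ, 0 < ρ σ) (hθ : ∀ σ, 0 < θ σ)
    (hvρ : ∀ σ, vρ σ = Cv * (log (θ σ) + (γ - 1) * log (ρ σ)) + γ * Cv - u σ ^ 2 * θ σ / 2)
    (hP : ∀ σ, P σ = (γ - 1) * Cv * ρ σ - pinf * θ σ) :
    mean u * logMean (ρ false) (ρ true) * jump vρ
        + (mean u ^ 2 * logMean (ρ false) (ρ true) + mean P / mean θ)
          * jump (fun σ => u σ * θ σ)
        + mean u * (logMean (ρ false) (ρ true) * (Cv / logMean (θ false) (θ true)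
            + u false * u true / 2) + mean P / mean θ + pinf) * jump (fun σ => -θ σ)
      = jump (fun σ => u σ * P σ) := by
  have hdiss := dissipation_dot_jump_entropyVar (pinf := pinf) (u := u) hρ hθ hvρ hP
  have hθuθ : jump (fun σ => u σ * θ σ) + jump (fun σ => -θ σ) * mean u = mean θ * jump u := by
    rw [jump_mul]; simp only [jump]; ring
  calc _ = mean u * jump P + mean P / mean θ * (mean θ * jump u) := by
        rw [← hdiss, ← hθuθ]; ring
    _ = jump (fun σ => u σ * P σ) := by
        rw [← mul_assoc, div_mul_cancel₀ _ (mean_pos hθ).ne', jump_mul]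

end StiffenedGas

lemma interface_work_balance {β μ T₀ T₁ θ₀ θ₁ u₀ u₁ p₀ p₁ uI pI : ℝ} (hβ : β ∈ Icc 0 1)
    (hT₀ : 0 < T₀) (hT₁ : 0 < T₁) (hθ₀ : θ₀ = 1 / T₀) (hθ₁ : θ₁ = 1 / T₁)
    (hμ : μ = (1 - β) * T₁ / (β * T₀ + (1 - β) * T₁)) (huI : uI = β * u₀ + (1 - β) * u₁)
    (hpI : pI = μ * p₀ + (1 - μ) * p₁) :
    θ₀ * (p₀ - pI) * (u₀ - uI) = θ₁ * (p₁ - pI) * (u₁ - uI) := by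
  -- `u₀ - uI = (1 - β) (u₀ - u₁)`, `u₁ - uI = -β (u₀ - u₁)`, and likewise for `p` with `μ`.
  have hweights : θ₀ * (1 - μ) * (1 - β) = θ₁ * μ * β := by
    have hD := (convex_combination_pos hβ hT₀ hT₁).ne'
    rw [hμ, one_sub_div hD, hθ₀, hθ₁]
    field_simp
    ring
  subst huI hpI
  linear_combination (p₀ - p₁) * (u₀ - u₁) * hweights

lemma entropyVar_dot_flux_sub_entropyFlux {α ρ u θ e p s h E : ℝ} (hρ : ρ ≠ 0)
    (hh : h = e + p / ρ) (hE : E = e + u ^ 2 / 2) :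
    (-s + (h - u ^ 2 / 2) * θ) * (α * ρ * u) + u * θ * (α * (ρ * u ^ 2 + p))
        + -θ * (α * u * (ρ * E + p)) + α * ρ * s * u
      = α * (u * (p * θ)) := by
  subst hh hE; field_simp; ring

end BaerNunziato

open BaerNunziato in
theorem entropy_conservation_condition_general
    (γ Cv pinf : Fin 2 → ℝ)
    (χ βs : ℝ) (hχ : χ = 0 ∨ χ = 1 / 2 ∨ χ = 1)
    (α ρ u T θ e pr s hh E : Bool → Fin 2 → ℝ)
    (β μ uI pI : Bool → ℝ)
    (hαpos : ∀ σ i, 0 < α σ i)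
    (hsat : ∀ σ, α σ 0 + α σ 1 = 1)
    (hρ : ∀ σ i, 0 < ρ σ i) (hT : ∀ σ i, 0 < T σ i)
    (hθ : ∀ σ i, θ σ i = 1 / T σ i)
    (he : ∀ σ i, e σ i = Cv i * T σ i + pinf i / ρ σ i)
    (hpr : ∀ σ i, pr σ i = (γ i - 1) * ρ σ i * e σ i - γ i * pinf i)
    (hs : ∀ σ i, s σ i = -(Cv i) * (Real.log (θ σ i) + (γ i - 1) * Real.log (ρ σ i)))
    (hhh : ∀ σ i, hh σ i = e σ i + pr σ i / ρ σ i)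
    (hE : ∀ σ i, E σ i = e σ i + (u σ i) ^ 2 / 2)
    (hβ : ∀ σ, β σ = χ * α σ 0 * ρ σ 0 / (χ * α σ 0 * ρ σ 0 + (1 - χ) * α σ 1 * ρ σ 1))
    (hμ : ∀ σ, μ σ = (1 - β σ) * T σ 1 / (β σ * T σ 0 + (1 - β σ) * T σ 1))
    (huI : ∀ σ, uI σ = β σ * u σ 0 + (1 - β σ) * u σ 1)
    (hpI : ∀ σ, pI σ = μ σ * pr σ 0 + (1 - μ σ) * pr σ 1) :
    -- jump and mean operators
    let jmp : (Bool → ℝ) → ℝ := fun f => f true - f false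
    let avg : (Bool → ℝ) → ℝ := fun f => (f true + f false) / 2
    let ja : Fin 2 → ℝ := fun i => jmp (fun σ => α σ i)
    -- logarithmic means
    let rhat : Fin 2 → ℝ := fun i => logMean (ρ false i) (ρ true i)
    let that : Fin 2 → ℝ := fun i => logMean (θ false i) (θ true i)
    -- entropy variables
    let vρ : Bool → Fin 2 → ℝ := fun σ i => -(s σ i) + (hh σ i - (u σ i) ^ 2 / 2) * θ σ i
    let vu : Bool → Fin 2 → ℝ := fun σ i => u σ i * θ σ i
    let vE : Bool → Fin 2 → ℝ := fun σ i => -(θ σ i)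
    let vα : Bool → ℝ := fun σ => pr σ 1 * θ σ 1 - pr σ 0 * θ σ 0
    -- components of the entropy conservative numerical flux h(u⁻,u⁺)
    let hα : ℝ := -(βs * (ja 0 / 2))
    let hρf : Fin 2 → ℝ := fun i =>
      avg (fun σ => α σ i) * avg (fun σ => u σ i) * rhat i - βs * (ja i / 2) * rhat i
    let hρuf : Fin 2 → ℝ := fun i =>
      avg (fun σ => α σ i) *
          ((avg (fun σ => u σ i)) ^ 2 * rhat i
            + avg (fun σ => pr σ i * θ σ i) / avg (fun σ => θ σ i))
        - βs * (ja i / 2) * (rhat i * avg (fun σ => u σ i))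
    let hρEf : Fin 2 → ℝ := fun i =>
      avg (fun σ => α σ i) * avg (fun σ => u σ i) *
          (rhat i * (Cv i / that i + u false i * u true i / 2)
            + avg (fun σ => pr σ i * θ σ i) / avg (fun σ => θ σ i) + pinf i)
        - βs * (ja i / 2) * (rhat i * (Cv i / that i + u false i * u true i / 2) + pinf i)
    -- v(u^σ)·d^σ(u⁻,u⁺) with d^σ = (⟦αᵢ⟧/2)(uI^σ, 0, -pI^σ, -pI^σ uI^σ)
    let vdotd : Bool → ℝ := fun σ =>
      vα σ * (ja 0 / 2) * uI σ
        + ∑ i : Fin 2,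
            (vu σ i * (-(pI σ)) * (ja i / 2) + vE σ i * (-(pI σ * uI σ)) * (ja i / 2))
    -- v(u)·f(u) - q(u)
    let fv : Bool → ℝ := fun σ =>
      ∑ i : Fin 2,
        (vρ σ i * (α σ i * ρ σ i * u σ i)
          + vu σ i * (α σ i * (ρ σ i * (u σ i) ^ 2 + pr σ i))
          + vE σ i * (α σ i * u σ i * (ρ σ i * E σ i + pr σ i))
          + α σ i * ρ σ i * s σ i * u σ i)
    vdotd false + vdotd true + (fv true - fv false)
      = hα * jmp vα
        + ∑ i : Fin 2,
            (hρf i * jmp (fun σ => vρ σ i)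
              + hρuf i * jmp (fun σ => vu σ i)
              + hρEf i * jmp (fun σ => vE σ i)) := by
  intro jmp avg ja rhat that vρ vu vE vα hα hρf hρuf hρEf vdotd fv
  have hρne σ i : ρ σ i ≠ 0 := (hρ σ i).ne'
  have hTne σ i : T σ i ≠ 0 := (hT σ i).ne'
  have hθpos σ i : 0 < θ σ i := hθ σ i ▸ one_div_pos.2 (hT σ i)
  have hα₁ σ : α σ 1 = 1 - α σ 0 := eq_sub_of_add_eq' (hsat σ)
  have hpθ σ i := stiffenedGas_pressure_mul_inv_temp (hρne σ i) (hTne σ i) (hθ σ i) (he σ i)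
    (hpr σ i)
  have hvρ σ i : vρ σ i = _ := stiffenedGas_entropyVar_eq (u := u σ i) (hρne σ i) (hTne σ i)
    (hθ σ i) (he σ i) (hpr σ i) (hs σ i) (hhh σ i)
  have hphase i : hρf i * jmp (fun σ => vρ σ i) + hρuf i * jmp (fun σ => vu σ i)
      + hρEf i * jmp (fun σ => vE σ i)
      = avg (fun σ => α σ i) * jmp (fun σ => u σ i * (pr σ i * θ σ i))
        - βs * (ja i / 2) * jmp (fun σ => pr σ i * θ σ i) := by
    have hdiss := dissipation_dot_jump_entropyVar (pinf := pinf i) (u := (u · i))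
      (P := fun σ => pr σ i * θ σ i) (hρ · i) (hθpos · i) (hvρ · i) (hpθ · i)
    have hEC := entropyConservativeFlux_dot_jump_entropyVar (pinf := pinf i) (u := (u · i))
      (P := fun σ => pr σ i * θ σ i) (hρ · i) (hθpos · i) (hvρ · i) (hpθ · i)
    simp only [jump, mean] at hdiss hEC
    simp only [hρf, hρuf, hρEf, jmp, avg, ja, rhat, that, vu, vE]
    linear_combination (avg fun σ => α σ i) * hEC - βs * (ja i / 2) * hdiss
  have hχ₀₁ : χ ∈ Icc 0 1 := by rcases hχ with rfl | rfl | rfl <;> norm_num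
  have hβ₀₁ σ : β σ ∈ Icc 0 1 := by
    rw [hβ, mul_assoc, mul_assoc]
    exact convex_weight_mem_Icc hχ₀₁ (mul_pos (hαpos σ 0) (hρ σ 0)) (mul_pos (hαpos σ 1) (hρ σ 1))
  have hinterface σ := interface_work_balance (hβ₀₁ σ) (hT σ 0) (hT σ 1) (hθ σ 0) (hθ σ 1)
    (hμ σ) (huI σ) (hpI σ)
  have hvdotd σ : vdotd σ = ja 0 / 2 * (u σ 1 * (pr σ 1 * θ σ 1) - u σ 0 * (pr σ 0 * θ σ 0)) := by
    simp only [vdotd, vα, vu, vE, ja, jmp, Fin.sum_univ_two, hα₁]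
    linear_combination (α true 0 - α false 0) / 2 * hinterface σ
  have hfv σ : fv σ = ∑ i : Fin 2, α σ i * (u σ i * (pr σ i * θ σ i)) :=
    Finset.sum_congr rfl fun i _ =>
      entropyVar_dot_flux_sub_entropyFlux (hρne σ i) (hhh σ i) (hE σ i)
  -- both sides are now `∑ i, avg αᵢ * jmp (uᵢ pᵢ θᵢ)` once `ja 1 = -ja 0` is used
  simp only [hvdotd, hfv, hphase, Fin.sum_univ_two, hα, vα, ja, jmp, avg, hα₁]
  ring

/-- Entropy conservation condition for the numerical fluxes of Proposition 4.2:
v(u⁻)·d⁻(u⁻,u⁺) + v(u⁺)·d⁺(u⁻,u⁺) + ⟦v·f - q⟧ = h(u⁻,u⁺)·⟦v⟧,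
for the Baer-Nunziato model with stiffened gas EOS and interface closures (intref_var).
States are indexed by σ : Bool (false = minus, true = plus), phases by i : Fin 2. -/
theorem entropy_conservation_condition
    (γ Cv pinf : Fin 2 → ℝ) (hγ : ∀ i, 1 < γ i) (hCv : ∀ i, 0 < Cv i) (hpinf : ∀ i, 0 ≤ pinf i)
    (χ βs : ℝ) (hχ : χ = 0 ∨ χ = 1 / 2 ∨ χ = 1) (hβs : 0 ≤ βs)
    (α ρ u T θ e pr s hh E : Bool → Fin 2 → ℝ)
    (β μ uI pI : Bool → ℝ)
    (hαpos : ∀ σ i, 0 < α σ i) (hαlt : ∀ σ i, α σ i < 1)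
    (hsat : ∀ σ, α σ 0 + α σ 1 = 1)
    (hρ : ∀ σ i, 0 < ρ σ i) (hT : ∀ σ i, 0 < T σ i)
    (hθ : ∀ σ i, θ σ i = 1 / T σ i)
    (he : ∀ σ i, e σ i = Cv i * T σ i + pinf i / ρ σ i)
    (hpr : ∀ σ i, pr σ i = (γ i - 1) * ρ σ i * e σ i - γ i * pinf i)
    (hs : ∀ σ i, s σ i = -(Cv i) * (Real.log (θ σ i) + (γ i - 1) * Real.log (ρ σ i)))
    (hhh : ∀ σ i, hh σ i = e σ i + pr σ i / ρ σ i)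
    (hE : ∀ σ i, E σ i = e σ i + (u σ i) ^ 2 / 2)
    (hβ : ∀ σ, β σ = χ * α σ 0 * ρ σ 0 / (χ * α σ 0 * ρ σ 0 + (1 - χ) * α σ 1 * ρ σ 1))
    (hμ : ∀ σ, μ σ = (1 - β σ) * T σ 1 / (β σ * T σ 0 + (1 - β σ) * T σ 1))
    (huI : ∀ σ, uI σ = β σ * u σ 0 + (1 - β σ) * u σ 1)
    (hpI : ∀ σ, pI σ = μ σ * pr σ 0 + (1 - μ σ) * pr σ 1) :
    -- jump and mean operators
    let jmp : (Bool → ℝ) → ℝ := fun f => f true - f false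
    let avg : (Bool → ℝ) → ℝ := fun f => (f true + f false) / 2
    let ja : Fin 2 → ℝ := fun i => jmp (fun σ => α σ i)
    -- logarithmic means
    let rhat : Fin 2 → ℝ := fun i => logMean (ρ false i) (ρ true i)
    let that : Fin 2 → ℝ := fun i => logMean (θ false i) (θ true i)
    -- entropy variables
    let vρ : Bool → Fin 2 → ℝ := fun σ i => -(s σ i) + (hh σ i - (u σ i) ^ 2 / 2) * θ σ i
    let vu : Bool → Fin 2 → ℝ := fun σ i => u σ i * θ σ i
    let vE : Bool → Fin 2 → ℝ := fun σ i => -(θ σ i)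
    let vα : Bool → ℝ := fun σ => pr σ 1 * θ σ 1 - pr σ 0 * θ σ 0
    -- components of the entropy conservative numerical flux h(u⁻,u⁺)
    let hα : ℝ := -(βs * (ja 0 / 2))
    let hρf : Fin 2 → ℝ := fun i =>
      avg (fun σ => α σ i) * avg (fun σ => u σ i) * rhat i - βs * (ja i / 2) * rhat i
    let hρuf : Fin 2 → ℝ := fun i =>
      avg (fun σ => α σ i) *
          ((avg (fun σ => u σ i)) ^ 2 * rhat i
            + avg (fun σ => pr σ i * θ σ i) / avg (fun σ => θ σ i))
        - βs * (ja i / 2) * (rhat i * avg (fun σ => u σ i))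
    let hρEf : Fin 2 → ℝ := fun i =>
      avg (fun σ => α σ i) * avg (fun σ => u σ i) *
          (rhat i * (Cv i / that i + u false i * u true i / 2)
            + avg (fun σ => pr σ i * θ σ i) / avg (fun σ => θ σ i) + pinf i)
        - βs * (ja i / 2) * (rhat i * (Cv i / that i + u false i * u true i / 2) + pinf i)
    -- v(u^σ)·d^σ(u⁻,u⁺) with d^σ = (⟦αᵢ⟧/2)(uI^σ, 0, -pI^σ, -pI^σ uI^σ)
    let vdotd : Bool → ℝ := fun σ =>
      vα σ * (ja 0 / 2) * uI σ
        + ∑ i : Fin 2,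
            (vu σ i * (-(pI σ)) * (ja i / 2) + vE σ i * (-(pI σ * uI σ)) * (ja i / 2))
    -- v(u)·f(u) - q(u)
    let fv : Bool → ℝ := fun σ =>
      ∑ i : Fin 2,
        (vρ σ i * (α σ i * ρ σ i * u σ i)
          + vu σ i * (α σ i * (ρ σ i * (u σ i) ^ 2 + pr σ i))
          + vE σ i * (α σ i * u σ i * (ρ σ i * E σ i + pr σ i))
          + α σ i * ρ σ i * s σ i * u σ i)
    vdotd false + vdotd true + (fv true - fv false)
      = hα * jmp vα
        + ∑ i : Fin 2,
            (hρf i * jmp (fun σ => vρ σ i)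
              + hρuf i * jmp (fun σ => vu σ i)
              + hρEf i * jmp (fun σ => vE σ i)) :=
  entropy_conservation_condition_general γ Cv pinf χ βs hχ α ρ u T θ e pr s hh E β μ uI pI hαpos
    hsat hρ hT hθ he hpr hs hhh hE hβ hμ huI hpI
end

section
/- For xi ranging over the conditions k22 ≥ 0, k33 ≥ 0, k44 ≥ 0, k32 = ū k22, k43 = ū k33, k42 = (Cv/θ̂ + u⁻u⁺/2)k22, the dissipation term satisfies ⟦v(u)⟧·Dν(u⁻,u⁺) = Σᵢ [k22(γᵢ-1)Cvᵢ⟦ρᵢ⟧⟦ln ρᵢ⟧ + k33 θ̄ᵢ⟦uᵢ⟧² - k44⟦Tᵢ⟧⟦θᵢ⟧] ≥ 0, i.e., the dissipation matrix of Proposition 4.4 yields a nonnegative entropy production. -/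
open Real

/-- When `a ≠ b` but `log a = log b`, both sides are `0` since `x / 0 = 0`. -/
lemma sub_div_logMean (a b : ℝ) : (b - a) / logMean a b = log b - log a := by
  unfold logMean
  split_ifs with hab
  · simp [hab]
  · rcases eq_or_ne (log b - log a) 0 with hlog | hlog
    · simp [hlog]
    · field_simp [sub_ne_zero.2 (Ne.symm hab)]

lemma MonotoneOn.sub_mul_sub_nonneg {s : Set ℝ} {f : ℝ → ℝ} (hf : MonotoneOn f s)
    {a b : ℝ} (ha : a ∈ s) (hb : b ∈ s) : 0 ≤ (b - a) * (f b - f a) := by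
  rcases le_total a b with hab | hba
  · exact mul_nonneg (sub_nonneg.2 hab) (sub_nonneg.2 (hf ha hb hab))
  · exact mul_nonneg_of_nonpos_of_nonpos (sub_nonpos.2 hba) (sub_nonpos.2 (hf hb ha hba))

lemma AntitoneOn.sub_mul_sub_nonpos {s : Set ℝ} {f : ℝ → ℝ} (hf : AntitoneOn f s)
    {a b : ℝ} (ha : a ∈ s) (hb : b ∈ s) : (b - a) * (f b - f a) ≤ 0 := by
  linear_combination hf.neg.sub_mul_sub_nonneg ha hb

lemma stiffenedGas_enthalpy_mul_theta {γ Cv pinf ρ T θ e p h : ℝ} (hρ : ρ ≠ 0) (hT : T ≠ 0)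
    (hθ : θ = 1 / T) (he : e = Cv * T + pinf / ρ) (hp : p = (γ - 1) * ρ * e - γ * pinf)
    (hh : h = e + p / ρ) : h * θ = γ * Cv := by
  subst hθ hh hp he
  field_simp
  ring

section Phase

variable (γ Cv k22 k32 k33 k42 k43 k44 : ℝ) (ρ u T θ s hh : Bool → ℝ)

/-- The contribution `⟦v⟧ · Dν ⟦(α, ρ, u, T)⟧` of one phase, with `v = (-s + (h - u²/2) θ, u θ, -θ)`
and the states `u⁻, u⁺` indexed by `false, true`. -/
noncomputable def phaseDissipation : ℝ :=
  ((-(s true) + (hh true - (u true) ^ 2 / 2) * θ true)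
      - (-(s false) + (hh false - (u false) ^ 2 / 2) * θ false)) * (k22 * (ρ true - ρ false))
    + (u true * θ true - u false * θ false) * (k32 * (ρ true - ρ false) + k33 * (u true - u false))
    + (-(θ true) - -(θ false)) *
        (k42 * (ρ true - ρ false) + k43 * (u true - u false) + k44 * (T true - T false))

noncomputable def phaseEntropyProduction : ℝ :=
  k22 * (γ - 1) * Cv * (ρ true - ρ false) * (log (ρ true) - log (ρ false))
    + k33 * ((θ true + θ false) / 2) * (u true - u false) ^ 2
    - k44 * (T true - T false) * (θ true - θ false)

variable {γ Cv k22 k32 k33 k42 k43 k44}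

lemma phaseDissipation_eq
    (hs : ∀ σ, s σ = -Cv * (log (θ σ) + (γ - 1) * log (ρ σ)))
    (hhθ : hh true * θ true = hh false * θ false)
    (hk32 : k32 = (u true + u false) / 2 * k22)
    (hk43 : k43 = (u true + u false) / 2 * k33)
    (hk42 : k42 = (Cv / logMean (θ false) (θ true) + u false * u true / 2) * k22) :
    phaseDissipation k22 k32 k33 k42 k43 k44 ρ u T θ s hh =
      phaseEntropyProduction γ Cv k22 k33 k44 ρ u T θ := by
  have hlogMean : (θ true - θ false) * (Cv / logMean (θ false) (θ true))
      = Cv * (log (θ true) - log (θ false)) := by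
    rw [← sub_div_logMean]
    ring
  unfold phaseDissipation phaseEntropyProduction
  rw [hs, hs, hk32, hk42, hk43]
  linear_combination (k22 * (ρ true - ρ false)) * (hhθ - hlogMean)

lemma phaseEntropyProduction_nonneg (hγ : 1 ≤ γ) (hCv : 0 ≤ Cv)
    (hk22 : 0 ≤ k22) (hk33 : 0 ≤ k33) (hk44 : 0 ≤ k44)
    (hρ : ∀ σ, 0 < ρ σ) (hT : ∀ σ, 0 < T σ) (hθ : ∀ σ, θ σ = 1 / T σ) :
    0 ≤ phaseEntropyProduction γ Cv k22 k33 k44 ρ u T θ := by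
  have hρ_log : 0 ≤ (ρ true - ρ false) * (log (ρ true) - log (ρ false)) :=
    strictMonoOn_log.monotoneOn.sub_mul_sub_nonneg (hρ false) (hρ true)
  have hT_θ : (T true - T false) * (θ true - θ false) ≤ 0 := by
    simp only [hθ, one_div]
    exact antitoneOn_inv_pos.sub_mul_sub_nonpos (hT false) (hT true)
  have hθ_pos (σ : Bool) : 0 < θ σ := by
    rw [hθ]
    exact one_div_pos.2 (hT σ)
  have hρ_term : 0 ≤ k22 * (γ - 1) * Cv * ((ρ true - ρ false) * (log (ρ true) - log (ρ false))) :=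
    mul_nonneg (mul_nonneg (mul_nonneg hk22 (sub_nonneg.2 hγ)) hCv) hρ_log
  have hu_term : 0 ≤ k33 * ((θ true + θ false) / 2) * (u true - u false) ^ 2 :=
    mul_nonneg (mul_nonneg hk33 (by linarith [hθ_pos true, hθ_pos false])) (sq_nonneg _)
  have hT_term : 0 ≤ k44 * -((T true - T false) * (θ true - θ false)) :=
    mul_nonneg hk44 (neg_nonneg.2 hT_θ)
  unfold phaseEntropyProduction
  linarith

end Phase

theorem dissipation_nonneg_general
    (γ Cv pinf : Fin 2 → ℝ) (hγ : ∀ i, 1 < γ i) (hCv : ∀ i, 0 < Cv i)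
    (ρ u T θ e pr s hh : Bool → Fin 2 → ℝ)
    (hρ : ∀ σ i, 0 < ρ σ i) (hT : ∀ σ i, 0 < T σ i)
    (hθ : ∀ σ i, θ σ i = 1 / T σ i)
    (he : ∀ σ i, e σ i = Cv i * T σ i + pinf i / ρ σ i)
    (hpr : ∀ σ i, pr σ i = (γ i - 1) * ρ σ i * e σ i - γ i * pinf i)
    (hs : ∀ σ i, s σ i = -(Cv i) * (Real.log (θ σ i) + (γ i - 1) * Real.log (ρ σ i)))
    (hhh : ∀ σ i, hh σ i = e σ i + pr σ i / ρ σ i)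
    (k22 k32 k33 k42 k43 k44 : Fin 2 → ℝ)
    (hk22 : ∀ i, 0 ≤ k22 i) (hk33 : ∀ i, 0 ≤ k33 i) (hk44 : ∀ i, 0 ≤ k44 i)
    (hk32 : ∀ i, k32 i = (u true i + u false i) / 2 * k22 i)
    (hk43 : ∀ i, k43 i = (u true i + u false i) / 2 * k33 i)
    (hk42 : ∀ i, k42 i =
      (Cv i / logMean (θ false i) (θ true i) + u false i * u true i / 2) * k22 i) :
    ((∑ i : Fin 2,
        (((-(s true i) + (hh true i - (u true i) ^ 2 / 2) * θ true i)
            - (-(s false i) + (hh false i - (u false i) ^ 2 / 2) * θ false i)) *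
              (k22 i * (ρ true i - ρ false i))
          + (u true i * θ true i - u false i * θ false i) *
              (k32 i * (ρ true i - ρ false i) + k33 i * (u true i - u false i))
          + (-(θ true i) - -(θ false i)) *
              (k42 i * (ρ true i - ρ false i) + k43 i * (u true i - u false i)
                + k44 i * (T true i - T false i))))
      = ∑ i : Fin 2,
        (k22 i * (γ i - 1) * Cv i * (ρ true i - ρ false i) *
            (Real.log (ρ true i) - Real.log (ρ false i))
          + k33 i * ((θ true i + θ false i) / 2) * (u true i - u false i) ^ 2
          - k44 i * (T true i - T false i) * (θ true i - θ false i)))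
    ∧ 0 ≤ ∑ i : Fin 2,
        (k22 i * (γ i - 1) * Cv i * (ρ true i - ρ false i) *
            (Real.log (ρ true i) - Real.log (ρ false i))
          + k33 i * ((θ true i + θ false i) / 2) * (u true i - u false i) ^ 2
          - k44 i * (T true i - T false i) * (θ true i - θ false i)) := by
  have hhθ (σ : Bool) (i : Fin 2) : hh σ i * θ σ i = γ i * Cv i :=
    stiffenedGas_enthalpy_mul_theta (hρ σ i).ne' (hT σ i).ne' (hθ σ i) (he σ i) (hpr σ i)
      (hhh σ i)
  refine ⟨Finset.sum_congr rfl fun i _ => ?_, Finset.sum_nonneg fun i _ => ?_⟩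
  · exact phaseDissipation_eq (ρ · i) (u · i) (T · i) (θ · i) (s · i) (hh · i) (hs · i)
      ((hhθ true i).trans (hhθ false i).symm) (hk32 i) (hk43 i) (hk42 i)
  · exact phaseEntropyProduction_nonneg (ρ · i) (u · i) (T · i) (θ · i) (hγ i).le (hCv i).le
      (hk22 i) (hk33 i) (hk44 i) (hρ · i) (hT · i) (hθ · i)

/-- Entropy dissipation of Proposition 4.4: under the conditions k22, k33, k44 ≥ 0,
k32 = ū k22, k43 = ū k33, k42 = (Cv/θ̂ + u⁻u⁺/2)k22, the dissipation term satisfies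
⟦v⟧·Dν(u⁻,u⁺) = Σᵢ [k22(γᵢ-1)Cvᵢ⟦ρᵢ⟧⟦ln ρᵢ⟧ + k33 θ̄ᵢ⟦uᵢ⟧² - k44⟦Tᵢ⟧⟦θᵢ⟧] ≥ 0. -/
theorem dissipation_nonneg
    (γ Cv pinf : Fin 2 → ℝ) (hγ : ∀ i, 1 < γ i) (hCv : ∀ i, 0 < Cv i) (hpinf : ∀ i, 0 ≤ pinf i)
    (ρ u T θ e pr s hh : Bool → Fin 2 → ℝ)
    (hρ : ∀ σ i, 0 < ρ σ i) (hT : ∀ σ i, 0 < T σ i)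
    (hθ : ∀ σ i, θ σ i = 1 / T σ i)
    (he : ∀ σ i, e σ i = Cv i * T σ i + pinf i / ρ σ i)
    (hpr : ∀ σ i, pr σ i = (γ i - 1) * ρ σ i * e σ i - γ i * pinf i)
    (hs : ∀ σ i, s σ i = -(Cv i) * (Real.log (θ σ i) + (γ i - 1) * Real.log (ρ σ i)))
    (hhh : ∀ σ i, hh σ i = e σ i + pr σ i / ρ σ i)
    (k22 k32 k33 k42 k43 k44 : Fin 2 → ℝ)
    (hk22 : ∀ i, 0 ≤ k22 i) (hk33 : ∀ i, 0 ≤ k33 i) (hk44 : ∀ i, 0 ≤ k44 i)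
    (hk32 : ∀ i, k32 i = (u true i + u false i) / 2 * k22 i)
    (hk43 : ∀ i, k43 i = (u true i + u false i) / 2 * k33 i)
    (hk42 : ∀ i, k42 i =
      (Cv i / logMean (θ false i) (θ true i) + u false i * u true i / 2) * k22 i) :
    ((∑ i : Fin 2,
        (((-(s true i) + (hh true i - (u true i) ^ 2 / 2) * θ true i)
            - (-(s false i) + (hh false i - (u false i) ^ 2 / 2) * θ false i)) *
              (k22 i * (ρ true i - ρ false i))
          + (u true i * θ true i - u false i * θ false i) *
              (k32 i * (ρ true i - ρ false i) + k33 i * (u true i - u false i))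
          + (-(θ true i) - -(θ false i)) *
              (k42 i * (ρ true i - ρ false i) + k43 i * (u true i - u false i)
                + k44 i * (T true i - T false i))))
      = ∑ i : Fin 2,
        (k22 i * (γ i - 1) * Cv i * (ρ true i - ρ false i) *
            (Real.log (ρ true i) - Real.log (ρ false i))
          + k33 i * ((θ true i + θ false i) / 2) * (u true i - u false i) ^ 2
          - k44 i * (T true i - T false i) * (θ true i - θ false i)))
    ∧ 0 ≤ ∑ i : Fin 2,
        (k22 i * (γ i - 1) * Cv i * (ρ true i - ρ false i) *
            (Real.log (ρ true i) - Real.log (ρ false i))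
          + k33 i * ((θ true i + θ false i) / 2) * (u true i - u false i) ^ 2
          - k44 i * (T true i - T false i) * (θ true i - θ false i)) :=
  dissipation_nonneg_general γ Cv pinf hγ hCv ρ u T θ e pr s hh hρ hT hθ he hpr hs hhh k22 k32 k33
    k42 k43 k44 hk22 hk33 hk44 hk32 hk43 hk42
end

section
/- The Gauss-Lobatto difference matrix D with entries D_{kl} = ℓ'_l(s_k), where ℓ_l are the Lagrange polynomials at the Gauss-Lobatto nodes s_0 < ... < s_p on [-1,1], satisfies the summation-by-parts property ω_k D_{kl} + ω_l D_{lk} = δ_{kp}δ_{lp} - δ_{k0}δ_{l0} for all 0 ≤ k,l ≤ p, where ω_k are the Gauss-Lobatto quadrature weights. -/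
/-!
`ω_k D_{kl} + ω_l D_{lk}` is the quadrature sum of `(ℓ_k ℓ_l)'`, because
`(ℓ_k ℓ_l)'(s_m) = ℓ_k'(s_m) δ_{lm} + δ_{km} ℓ_l'(s_m)`. As `(ℓ_k ℓ_l)'` has degree at most `2p - 1`, the rule
integrates it exactly, and by the fundamental theorem of calculus the integral is
`(ℓ_k ℓ_l)(1) - (ℓ_k ℓ_l)(-1)`, which the nodal property of `ℓ_k, ℓ_l` at `s_p = 1` and
`s_0 = -1` turns into the right-hand side.
-/

open Polynomial Finset

theorem Polynomial.integral_eval_derivative (f : ℝ[X]) (a b : ℝ) :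
    ∫ x in a..b, (derivative f).eval x = f.eval b - f.eval a :=
  intervalIntegral.integral_deriv_eq_sub' _ (_root_.funext fun _ => f.deriv)
    (fun _ _ => f.differentiableAt) (derivative f).continuous.continuousOn

namespace Lagrange

variable {F ι : Type*} [Field F] [DecidableEq ι] {s : Finset ι} {v : ι → F} {i j k l : ι}

theorem eval_basis_node (hvs : Set.InjOn v s) (hi : i ∈ s) (hj : j ∈ s) :
    (Lagrange.basis s v i).eval (v j) = if i = j then 1 else 0 := by
  split_ifs with hij
  · exact hij ▸ eval_basis_self hvs hi
  · exact eval_basis_of_ne hij hj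

theorem eval_basis_mul_basis_node (hvs : Set.InjOn v s) (hk : k ∈ s) (hl : l ∈ s) (hj : j ∈ s) :
    (Lagrange.basis s v k * Lagrange.basis s v l).eval (v j) =
      if k = j ∧ l = j then 1 else 0 := by
  rw [eval_mul, eval_basis_node hvs hk hj, eval_basis_node hvs hl hj]
  split_ifs <;> simp_all

theorem natDegree_basis_mul_basis_le (hvs : Set.InjOn v s) (hk : k ∈ s) (hl : l ∈ s) :
    (Lagrange.basis s v k * Lagrange.basis s v l).natDegree ≤ 2 * (#s - 1) :=
  natDegree_mul_le.trans_eq <| by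
    rw [natDegree_basis hvs hk, natDegree_basis hvs hl, two_mul]

theorem sum_mul_eval_derivative_basis_mul_basis (hvs : Set.InjOn v s) (hk : k ∈ s) (hl : l ∈ s)
    (w : ι → F) :
    ∑ m ∈ s, w m * (derivative (Lagrange.basis s v k * Lagrange.basis s v l)).eval (v m) =
      w l * (derivative (Lagrange.basis s v k)).eval (v l) +
        w k * (derivative (Lagrange.basis s v l)).eval (v k) := by
  have hnode : ∀ m ∈ s,
      w m * (derivative (Lagrange.basis s v k * Lagrange.basis s v l)).eval (v m) =
        (if l = m then w m * (derivative (Lagrange.basis s v k)).eval (v m) else 0) +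
          (if k = m then w m * (derivative (Lagrange.basis s v l)).eval (v m) else 0) := by
    intro m hm
    rw [derivative_mul, eval_add, eval_mul, eval_mul, eval_basis_node hvs hl hm,
      eval_basis_node hvs hk hm]
    split_ifs <;> ring
  rw [sum_congr rfl hnode, sum_add_distrib, sum_ite_eq, sum_ite_eq, if_pos hl, if_pos hk]

end Lagrange

theorem gauss_lobatto_SBP_general (p : ℕ)
    (s ω : Fin (p + 1) → ℝ)
    (hs : StrictMono s) (h0 : s 0 = -1) (hlast : s (Fin.last p) = 1)
    (hexact : ∀ f : Polynomial ℝ, f.natDegree ≤ 2 * p - 1 →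
      ∑ k, ω k * f.eval (s k) = ∫ x in (-1 : ℝ)..(1 : ℝ), f.eval x)
    (D : Fin (p + 1) → Fin (p + 1) → ℝ)
    (hD : ∀ k l, D k l = (Polynomial.derivative (Lagrange.basis Finset.univ s l)).eval (s k)) :
    ∀ k l, ω k * D k l + ω l * D l k =
      (if k = Fin.last p ∧ l = Fin.last p then (1 : ℝ) else 0)
        - (if k = 0 ∧ l = 0 then (1 : ℝ) else 0) := by
  intro k l
  have hinj : Set.InjOn s (univ : Finset (Fin (p + 1))) := hs.injective.injOn
  have hdeg := Lagrange.natDegree_basis_mul_basis_le hinj (mem_univ k) (mem_univ l)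
  rw [card_univ, Fintype.card_fin, Nat.add_sub_cancel] at hdeg
  have hSBP := hexact _ ((natDegree_derivative_le _).trans (Nat.sub_le_sub_right hdeg 1))
  rw [Lagrange.sum_mul_eval_derivative_basis_mul_basis hinj (mem_univ k) (mem_univ l),
    integral_eval_derivative, ← h0, ← hlast,
    Lagrange.eval_basis_mul_basis_node hinj (mem_univ k) (mem_univ l) (mem_univ _),
    Lagrange.eval_basis_mul_basis_node hinj (mem_univ k) (mem_univ l) (mem_univ _)] at hSBP
  rw [hD, hD]
  linarith

/-- Summation-by-parts property of the Gauss-Lobatto difference matrix: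
ω_k D_{kl} + ω_l D_{lk} = δ_{kp}δ_{lp} - δ_{k0}δ_{l0}, where D_{kl} = ℓ'_l(s_k),
for a Gauss-Lobatto rule on [-1,1] with p+1 nodes (s_0 = -1, s_p = 1), positive
weights summing to 2, exact for polynomials of degree ≤ 2p-1. -/
theorem gauss_lobatto_SBP (p : ℕ) (hp : 0 < p)
    (s ω : Fin (p + 1) → ℝ)
    (hs : StrictMono s) (h0 : s 0 = -1) (hlast : s (Fin.last p) = 1)
    (hω : ∀ k, 0 < ω k) (hsum : ∑ k, ω k = 2)
    (hexact : ∀ f : Polynomial ℝ, f.natDegree ≤ 2 * p - 1 →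
      ∑ k, ω k * f.eval (s k) = ∫ x in (-1 : ℝ)..(1 : ℝ), f.eval x)
    (D : Fin (p + 1) → Fin (p + 1) → ℝ)
    (hD : ∀ k l, D k l = (Polynomial.derivative (Lagrange.basis Finset.univ s l)).eval (s k)) :
    ∀ k l, ω k * D k l + ω l * D l k =
      (if k = Fin.last p ∧ l = Fin.last p then (1 : ℝ) else 0)
        - (if k = 0 ∧ l = 0 then (1 : ℝ) else 0) :=
  gauss_lobatto_SBP_general p s ω hs h0 hlast hexact D hD
end

section
/- A convex combination is positive: if θ_j = min((⟨m⟩ - ε)/(⟨m⟩ - m_min), 1) with 0 < ε < ⟨m⟩ and m_min < ⟨m⟩, then the limited values m̃^k = θ_j(m^k - ⟨m⟩) + ⟨m⟩ satisfy m̃^k ≥ ε for all k, where m_min = min_k m^k and ⟨m⟩ = Σ_k (ω_k/2) m^k with ω_k > 0, Σω_k = 2. -/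
/-!
The limited value `θ (x - avg) + avg` is monotone in `x` for `θ ≥ 0`, so it suffices to bound it at
`x = mmin`. There the choice `θ ≤ (avg - ε) / (avg - mmin)` gives exactly `θ (avg - mmin) ≤ avg - ε`;
when `mmin ≥ avg` no limiting is needed, since then every value already lies above `avg > ε`.
-/

section LinearOrderedField

variable {K : Type*} [Field K] [LinearOrder K] [IsStrictOrderedRing K] {avg mmin ε x : K}

def limiterScale (avg mmin ε : K) : K :=
  if mmin < avg then min ((avg - ε) / (avg - mmin)) 1 else 1

theorem limiterScale_nonneg (hε : ε ≤ avg) : 0 ≤ limiterScale avg mmin ε := by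
  unfold limiterScale
  split_ifs with h
  · exact le_min (div_nonneg (sub_nonneg.2 hε) (sub_pos.2 h).le) zero_le_one
  · exact zero_le_one

theorem limiterScale_mul_sub_le (hε : ε ≤ avg) :
    limiterScale avg mmin ε * (avg - mmin) ≤ avg - ε := by
  unfold limiterScale
  split_ifs with h
  · have hd : 0 < avg - mmin := sub_pos.2 h
    calc min ((avg - ε) / (avg - mmin)) 1 * (avg - mmin)
        ≤ (avg - ε) / (avg - mmin) * (avg - mmin) :=
          mul_le_mul_of_nonneg_right (min_le_left _ _) hd.le
      _ = avg - ε := div_mul_cancel₀ _ hd.ne'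
  · linarith [not_lt.1 h]

theorem le_limiterScale_mul_sub_add (hε : ε ≤ avg) (hx : mmin ≤ x) :
    ε ≤ limiterScale avg mmin ε * (x - avg) + avg := by
  have hθ := limiterScale_nonneg (mmin := mmin) hε
  calc ε ≤ avg - limiterScale avg mmin ε * (avg - mmin) := by
        linarith [limiterScale_mul_sub_le (mmin := mmin) hε]
    _ = limiterScale avg mmin ε * (mmin - avg) + avg := by ring
    _ ≤ limiterScale avg mmin ε * (x - avg) + avg := by gcongr

end LinearOrderedField

theorem limiter_positivity_general (p : ℕ) (mval : Fin (p + 1) → ℝ) (ε : ℝ)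
    (avg mmin θj : ℝ)
    (hmin : mmin = Finset.univ.inf' Finset.univ_nonempty mval)
    (hεavg : ε < avg)
    (hθ : θj = if mmin < avg then min ((avg - ε) / (avg - mmin)) 1 else 1) :
    ∀ k, ε ≤ θj * (mval k - avg) + avg := by
  intro k
  have hk : mmin ≤ mval k := hmin ▸ Finset.inf'_le _ (Finset.mem_univ k)
  rw [hθ]
  exact le_limiterScale_mul_sub_add hεavg.le hk

/-- The a posteriori limiter preserves positivity: with
θ_j = min((⟨m⟩-ε)/(⟨m⟩-m_min), 1) (θ_j = 1 if m_min ≥ ⟨m⟩), the limited values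
m̃^k = θ_j(m^k - ⟨m⟩) + ⟨m⟩ satisfy m̃^k ≥ ε for all k, provided 0 < ε < ⟨m⟩. -/
theorem limiter_positivity (p : ℕ) (ω mval : Fin (p + 1) → ℝ) (ε : ℝ)
    (hω : ∀ k, 0 < ω k) (hωsum : ∑ k, ω k = 2)
    (avg mmin θj : ℝ)
    (havg : avg = ∑ k, ω k / 2 * mval k)
    (hmin : mmin = Finset.univ.inf' Finset.univ_nonempty mval)
    (hε : 0 < ε) (hεavg : ε < avg)
    (hθ : θj = if mmin < avg then min ((avg - ε) / (avg - mmin)) 1 else 1) :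
    ∀ k, ε ≤ θj * (mval k - avg) + avg :=
  limiter_positivity_general p mval ε avg mmin θj hmin hεavg hθ
end
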